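/- For every digraph D on n vertices, γ⁺ₘ(D) ≤ (n − Δ⁺(D) + 1)/2. -/

import Mathlib

/-!
Take a vertex `v` of maximum out-degree `Δ`: since there are no loops, `N⁺[v]` already has
`Δ + 1` vertices. Adding `⌈n/2⌉ - (Δ + 1)` vertices outside `N⁺[v]` to `{v}` gives a set whose
closed out-neighbourhood has at least `⌈n/2⌉` vertices, and `2 (1 + ⌈n/2⌉ - (Δ + 1)) ≤ n - Δ + 1`.
-/

/-- Closed out-neighborhood `N⁺[S]` of a set `S` in the digraph with arc relation `A`. -/
noncomputable def closedOut {V : Type*} [Fintype V] [DecidableEq V]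
    (A : V → V → Prop) (S : Finset V) : Finset V :=
  S ∪ @Finset.filter _ (fun v => ∃ u ∈ S, A u v) (Classical.decPred _) Finset.univ

/-- `S` is a majority out-dominating set: `|N⁺[S]| ≥ n/2`. -/
def IsMODS {V : Type*} [Fintype V] [DecidableEq V]
    (A : V → V → Prop) (S : Finset V) : Prop :=
  2 * (closedOut A S).card ≥ Fintype.card V

/-- Set majority out-domination number `γ⁺ₘ`. -/
noncomputable def gammaM {V : Type*} [Fintype V] [DecidableEq V]
    (A : V → V → Prop) : ℕ :=
  sInf {k | ∃ S : Finset V, IsMODS A S ∧ S.card = k}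

/-- Out-domination number `γ⁺`. -/
noncomputable def gammaPlus {V : Type*} [Fintype V] [DecidableEq V]
    (A : V → V → Prop) : ℕ :=
  sInf {k | ∃ S : Finset V, closedOut A S = Finset.univ ∧ S.card = k}

/-- Out-degree of a vertex. -/
noncomputable def outDeg {V : Type*} [Fintype V] [DecidableEq V]
    (A : V → V → Prop) (v : V) : ℕ :=
  (@Finset.filter _ (fun w => A v w) (Classical.decPred _) Finset.univ).card

/-- Maximum out-degree `Δ⁺`. -/
noncomputable def DeltaPlus {V : Type*} [Fintype V] [DecidableEq V]
    (A : V → V → Prop) : ℕ :=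
  Finset.univ.sup (outDeg A)

section

variable {V : Type*} [Fintype V] [DecidableEq V] (A : V → V → Prop)

lemma mem_closedOut {S : Finset V} {w : V} :
    w ∈ closedOut A S ↔ w ∈ S ∨ ∃ u ∈ S, A u w := by
  simp [closedOut]

lemma closedOut_mono {S T : Finset V} (h : S ⊆ T) : closedOut A S ⊆ closedOut A T := by
  intro w hw
  rcases (mem_closedOut A).1 hw with hwS | ⟨u, huS, huw⟩
  · exact (mem_closedOut A).2 (Or.inl (h hwS))
  · exact (mem_closedOut A).2 (Or.inr ⟨u, h huS, huw⟩)

lemma subset_closedOut (S : Finset V) : S ⊆ closedOut A S :=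
  fun _ hw => (mem_closedOut A).2 (Or.inl hw)

lemma card_closedOut_singleton {v : V} (hv : ¬ A v v) :
    (closedOut A {v}).card = outDeg A v + 1 := by
  classical
  have h : closedOut A {v} = insert v (Finset.univ.filter (A v)) := by
    ext w
    simp [mem_closedOut, eq_comm]
  rw [h, Finset.card_insert_of_notMem (by simpa using hv), outDeg]

lemma exists_outDeg_eq_deltaPlus [Nonempty V] : ∃ v, outDeg A v = DeltaPlus A := by
  obtain ⟨v, -, hv⟩ := Finset.exists_mem_eq_sup Finset.univ Finset.univ_nonempty (outDeg A)
  exact ⟨v, hv.symm⟩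

lemma exists_le_card_closedOut (S : Finset V) {m : ℕ} (hm : m ≤ Fintype.card V) :
    ∃ T, m ≤ (closedOut A T).card ∧ T.card ≤ S.card + (m - (closedOut A S).card) := by
  have hroom : m - (closedOut A S).card ≤ (Finset.univ \ closedOut A S).card := by
    rw [Finset.card_sdiff_of_subset (Finset.subset_univ _), Finset.card_univ]
    omega
  obtain ⟨R, hR, hRcard⟩ := Finset.exists_subset_card_eq hroom
  refine ⟨S ∪ R, ?_, hRcard ▸ Finset.card_union_le S R⟩
  have hdisj : Disjoint (closedOut A S) R :=
    Finset.disjoint_right.2 fun _ hx => (Finset.mem_sdiff.1 (hR hx)).2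
  have hsub : closedOut A S ∪ R ⊆ closedOut A (S ∪ R) :=
    Finset.union_subset (closedOut_mono A Finset.subset_union_left)
      (Finset.subset_union_right.trans (subset_closedOut A _))
  have := Finset.card_le_card hsub
  rw [Finset.card_union_of_disjoint hdisj, hRcard] at this
  omega

lemma gammaM_le_card_add (S : Finset V) :
    gammaM A ≤ S.card + ((Fintype.card V + 1) / 2 - (closedOut A S).card) := by
  obtain ⟨T, hT, hTcard⟩ :=
    exists_le_card_closedOut A S (m := (Fintype.card V + 1) / 2) (by omega)
  have hT' : IsMODS A T := by unfold IsMODS; omega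
  exact (Nat.sInf_le (show T.card ∈ {k | ∃ S : Finset V, IsMODS A S ∧ S.card = k}
    from ⟨T, hT', rfl⟩)).trans hTcard

end

/-- `γ⁺ₘ(D) ≤ (n - Δ⁺(D) + 1)/2`. -/
theorem stmt13 {V : Type*} [Fintype V] [DecidableEq V] [Nonempty V]
    (A : V → V → Prop) (hloop : ∀ v, ¬ A v v) :
    (gammaM A : ℝ) ≤ ((Fintype.card V : ℝ) - (DeltaPlus A : ℝ) + 1) / 2 := by
  obtain ⟨v, hv⟩ := exists_outDeg_eq_deltaPlus A
  have hcard := card_closedOut_singleton A (hloop v)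
  have hle := gammaM_le_card_add A {v}
  have hn := Finset.card_le_univ (closedOut A {v})
  rw [hcard, hv, Finset.card_singleton] at hle
  rw [hcard, hv] at hn
  have hnat : 2 * gammaM A + DeltaPlus A ≤ Fintype.card V + 1 := by omega
  have hreal : (2 * gammaM A + DeltaPlus A : ℝ) ≤ Fintype.card V + 1 := by exact_mod_cast hnat
  linarith
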